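/- Let n ≥ 1 and d = 2ⁿ, and let U, V be n-qubit unitaries (d×d complex unitary matrices). Then C^L_prod(U,V) ≤ C^G_prod(U,V) ≤ n · C^L_prod(U,V). -/

import Mathlib

open MeasureTheory Matrix Finset

noncomputable instance {m : Type*} [Fintype m] [DecidableEq m] :
    MeasurableSpace (Matrix.unitaryGroup m ℂ) := borel _

/-- The Haar-random product state `⊗ᵢ wᵢ|0⟩` on `n` qubits, where the `n`-qubit Hilbert space
`(ℂ²)^{⊗n}` is identified with `(Fin n → Fin 2) → ℂ` (of dimension `2ⁿ`). -/
noncomputable def prodState {n : ℕ} (q₀ : Fin 2 → ℂ)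
    (w : Fin n → Matrix.unitaryGroup (Fin 2) ℂ) : (Fin n → Fin 2) → ℂ :=
  fun x => ∏ i, ((w i : Matrix (Fin 2) (Fin 2) ℂ) *ᵥ q₀) (x i)

/-- The operator `ψᵢψᵢ† ⊗ 𝟙_ī` acting as the rank-one projection onto `ψ i` on the `i`-th
qubit and as the identity on all other qubits. -/
noncomputable def localProj {n : ℕ} (ψ : Fin n → Fin 2 → ℂ) (i : Fin n) :
    Matrix (Fin n → Fin 2) (Fin n → Fin 2) ℂ :=
  fun x y => ψ i (x i) * (starRingEnd ℂ) (ψ i (y i)) *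
    (if Function.update x i (y i) = y then 1 else 0)

/-!
Fix a product state `Ψ = ⊗ᵢ ψᵢ`, put `φ = V†UΨ` and `P_s = (⊗_{i ∈ s} ψᵢψᵢ†) ⊗ 𝟙`. The local
terms are `Lᵢ = ⟨φ, P_{i} φ⟩` and the global term is `G = |⟨φ, Ψ⟩|² = ⟨φ, P_univ φ⟩`. Since
`P_s P_t = P_{s ∪ t}`, these are commuting projections, so in the Loewner order `P_univ ≤ P_{i}`
and, by the union bound `1 - P_univ ≤ ∑ᵢ (1 - P_{i})`, `∑ᵢ P_{i} ≤ (n - 1) + P_univ`. Evaluating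
at the unit vector `φ` gives `G ≤ Lᵢ ≤ 1` and `∑ᵢ Lᵢ ≤ n - 1 + G` for every product state;
averaging over `i` and integrating gives both bounds.
-/

open scoped MatrixOrder ComplexOrder

lemma IsStarProjection.one_sub_mul_le {R : Type*} [Ring R] [PartialOrder R] [StarRing R]
    [StarOrderedRing R] {p q : R} (hp : IsStarProjection p) (hq : IsStarProjection q)
    (hpq : Commute p q) : 1 - p * q ≤ (1 - p) + (1 - q) := by
  have h := (hp.one_sub.mul hq.one_sub
    ((Commute.one_right _).sub_right ((Commute.one_left q).sub_left hpq))).nonneg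
  rw [← sub_nonneg]
  convert h using 1
  noncomm_ring

lemma Finset.piecewise_one_mul_piecewise_one {ι M : Type*} [DecidableEq ι] [Monoid M]
    {p : ι → M} (hp : ∀ i, IsIdempotentElem (p i)) (s t : Finset ι) :
    s.piecewise p 1 * t.piecewise p 1 = (s ∪ t).piecewise p 1 := by
  ext i
  by_cases hs : i ∈ s <;> by_cases ht : i ∈ t <;> simp [hs, ht, (hp i).eq]

namespace Matrix

section PiKron

variable {ι α R : Type*} [Fintype ι] [CommSemiring R]

/-- The Kronecker product `⊗ᵢ Aᵢ`, acting on `(ι → α) → R ≅ ⊗ᵢ (α → R)`. -/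
def piKron (A : ι → Matrix α α R) : Matrix (ι → α) (ι → α) R :=
  of fun x y => ∏ i, A i (x i) (y i)

def piTensor (v : ι → α → R) : (ι → α) → R := fun x => ∏ i, v i (x i)

@[simp] lemma piKron_apply (A : ι → Matrix α α R) (x y : ι → α) :
    piKron A x y = ∏ i, A i (x i) (y i) := rfl

lemma piKron_mul [DecidableEq ι] [Fintype α] (A B : ι → Matrix α α R) :
    piKron A * piKron B = piKron (A * B) := by
  ext x y
  simp only [mul_apply, piKron_apply, Pi.mul_apply, Fintype.prod_sum, prod_mul_distrib]

lemma piKron_one [DecidableEq α] : piKron (1 : ι → Matrix α α R) = 1 := by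
  ext x y
  simp [one_apply, prod_boole, funext_iff]

lemma conjTranspose_piKron [StarRing R] (A : ι → Matrix α α R) :
    (piKron A)ᴴ = piKron fun i => (A i)ᴴ := by
  ext x y
  simp [star_prod]

lemma piKron_vecMulVec (u v : ι → α → R) :
    piKron (fun i => vecMulVec (u i) (v i)) = vecMulVec (piTensor u) (piTensor v) := by
  ext x y
  simp [vecMulVec_apply, piTensor, prod_mul_distrib]

lemma piTensor_dotProduct [DecidableEq ι] [Fintype α] (u v : ι → α → R) :
    piTensor u ⬝ᵥ piTensor v = ∏ i, u i ⬝ᵥ v i := by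
  simp only [dotProduct, piTensor, ← prod_mul_distrib, Fintype.prod_sum]

lemma star_piTensor [StarRing R] (v : ι → α → R) : star (piTensor v) = piTensor (star v) := by
  ext x
  simp [piTensor, star_prod]

lemma star_piTensor_dotProduct_self [DecidableEq ι] [Fintype α] [StarRing R] {v : ι → α → R}
    (hv : ∀ i, star (v i) ⬝ᵥ v i = 1) : star (piTensor v) ⬝ᵥ piTensor v = 1 := by
  simp [star_piTensor, piTensor_dotProduct, hv]

end PiKron

section VectorState

variable {n 𝕜 : Type*} [Fintype n] [RCLike 𝕜]

lemma isStarProjection_vecMulVec_star [DecidableEq n] {v : n → 𝕜} (hv : star v ⬝ᵥ v = 1) :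
    IsStarProjection (vecMulVec v (star v)) where
  isIdempotentElem := by
    rw [IsIdempotentElem, vecMulVec_mul_vecMulVec, hv, one_smul]
  isSelfAdjoint := by
    rw [IsSelfAdjoint, star_eq_conjTranspose, conjTranspose_vecMulVec, star_star]

def vectorState (φ : n → 𝕜) : Matrix n n 𝕜 →+ ℝ where
  toFun M := RCLike.re (star φ ⬝ᵥ (M *ᵥ φ))
  map_zero' := by simp
  map_add' M N := by simp [add_mulVec, dotProduct_add]

@[simp] lemma vectorState_apply (φ : n → 𝕜) (M : Matrix n n 𝕜) :
    vectorState φ M = RCLike.re (star φ ⬝ᵥ (M *ᵥ φ)) := rfl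

lemma vectorState_mono (φ : n → 𝕜) : Monotone (vectorState φ) := by
  intro M N hMN
  rw [← sub_nonneg, ← map_sub]
  exact (RCLike.nonneg_iff.mp ((le_iff.mp hMN).dotProduct_mulVec_nonneg φ)).1

lemma vectorState_one [DecidableEq n] {φ : n → 𝕜} (hφ : star φ ⬝ᵥ φ = 1) :
    vectorState φ 1 = 1 := by
  simp [hφ]

lemma vectorState_le_one [DecidableEq n] {φ : n → 𝕜} (hφ : star φ ⬝ᵥ φ = 1)
    {P : Matrix n n 𝕜} (hP : IsStarProjection P) : vectorState φ P ≤ 1 :=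
  vectorState_one hφ ▸ vectorState_mono φ hP.le_one

lemma vectorState_mul_mul_conjTranspose (φ : n → 𝕜) (W M : Matrix n n 𝕜) :
    vectorState φ (W * M * Wᴴ) = vectorState (Wᴴ *ᵥ φ) M := by
  simp only [vectorState_apply, star_mulVec, conjTranspose_conjTranspose, ← mulVec_mulVec,
    dotProduct_mulVec, vecMul_vecMul]

lemma vectorState_vecMulVec_star (φ v : n → 𝕜) :
    vectorState φ (vecMulVec v (star v)) = ‖star φ ⬝ᵥ v‖ ^ 2 := by
  rw [vectorState_apply, vecMulVec_mulVec, dotProduct_smul, op_smul_eq_mul, star_dotProduct v φ,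
    RCLike.star_def, RCLike.mul_conj, ← RCLike.ofReal_pow, RCLike.ofReal_re]

lemma star_mulVec_dotProduct_mulVec [DecidableEq n] {A : Matrix n n 𝕜} (hA : Aᴴ * A = 1)
    (v : n → 𝕜) : star (A *ᵥ v) ⬝ᵥ (A *ᵥ v) = star v ⬝ᵥ v := by
  rw [star_mulVec, dotProduct_mulVec, vecMul_vecMul, hA, vecMul_one]

end VectorState

section TensorProj

variable {ι α 𝕜 : Type*} [Fintype ι] [DecidableEq ι] [DecidableEq α] [RCLike 𝕜]

def tensorProj (ψ : ι → α → 𝕜) (s : Finset ι) : Matrix (ι → α) (ι → α) 𝕜 :=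
  piKron (s.piecewise (fun i => vecMulVec (ψ i) (star (ψ i))) 1)

lemma tensorProj_univ (ψ : ι → α → 𝕜) :
    tensorProj ψ univ = vecMulVec (piTensor ψ) (star (piTensor ψ)) := by
  rw [tensorProj, piecewise_univ, star_piTensor, ← piKron_vecMulVec]
  rfl

variable [Fintype α] {ψ : ι → α → 𝕜} (hψ : ∀ i, star (ψ i) ⬝ᵥ ψ i = 1)
include hψ

lemma tensorProj_mul (s t : Finset ι) :
    tensorProj ψ s * tensorProj ψ t = tensorProj ψ (s ∪ t) := by
  rw [tensorProj, tensorProj, piKron_mul, piecewise_one_mul_piecewise_one]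
  · rfl
  · exact fun i => (isStarProjection_vecMulVec_star (hψ i)).isIdempotentElem

lemma isStarProjection_tensorProj (s : Finset ι) : IsStarProjection (tensorProj ψ s) where
  isIdempotentElem := by rw [IsIdempotentElem, tensorProj_mul hψ, union_self]
  isSelfAdjoint := by
    rw [IsSelfAdjoint, star_eq_conjTranspose, tensorProj, conjTranspose_piKron]
    congr 1
    ext1 i
    by_cases hi : i ∈ s
    · simp [hi, conjTranspose_vecMulVec]
    · simp [hi]

lemma commute_tensorProj (s t : Finset ι) : Commute (tensorProj ψ s) (tensorProj ψ t) := by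
  rw [Commute, SemiconjBy, tensorProj_mul hψ, tensorProj_mul hψ, union_comm]

lemma tensorProj_le_of_subset {s t : Finset ι} (hst : s ⊆ t) :
    tensorProj ψ t ≤ tensorProj ψ s :=
  (isStarProjection_tensorProj hψ t).le_of_mul_eq_right (isStarProjection_tensorProj hψ s)
    (by rw [tensorProj_mul hψ, union_eq_right.mpr hst])

lemma one_sub_tensorProj_le_sum (s : Finset ι) :
    1 - tensorProj ψ s ≤ ∑ i ∈ s, (1 - tensorProj ψ {i}) := by
  induction s using Finset.induction_on with
  | empty => simp [tensorProj, piKron_one]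
  | @insert i s hi ih =>
    calc 1 - tensorProj ψ (insert i s) = 1 - tensorProj ψ {i} * tensorProj ψ s := by
          rw [tensorProj_mul hψ, singleton_union]
      _ ≤ (1 - tensorProj ψ {i}) + (1 - tensorProj ψ s) :=
          (isStarProjection_tensorProj hψ {i}).one_sub_mul_le
            (isStarProjection_tensorProj hψ s) (commute_tensorProj hψ _ _)
      _ ≤ ∑ j ∈ insert i s, (1 - tensorProj ψ {j}) := by
          rw [sum_insert hi]
          gcongr

lemma sum_vectorState_tensorProj_singleton_le {φ : (ι → α) → 𝕜} (hφ : star φ ⬝ᵥ φ = 1)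
    (s : Finset ι) :
    ∑ i ∈ s, vectorState φ (tensorProj ψ {i}) ≤ #s - 1 + vectorState φ (tensorProj ψ s) := by
  have h := vectorState_mono φ (one_sub_tensorProj_le_sum hψ s)
  simp only [map_sub, map_sum, vectorState_one hφ, sum_sub_distrib, sum_const, map_nsmul] at h
  rw [nsmul_eq_mul, mul_one] at h
  linarith

end TensorProj

end Matrix

lemma localProj_eq_tensorProj {n : ℕ} (ψ : Fin n → Fin 2 → ℂ) (i : Fin n) :
    localProj ψ i = tensorProj ψ {i} := by
  ext x y
  rw [tensorProj, piKron_apply, Fintype.prod_eq_mul_prod_compl i]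
  have hrest : ∏ j ∈ {i}ᶜ, ({i} : Finset (Fin n)).piecewise
      (fun i => vecMulVec (ψ i) (star (ψ i))) 1 j (x j) (y j) =
      if ∀ j ∈ ({i}ᶜ : Finset (Fin n)), x j = y j then 1 else 0 := by
    convert prod_boole using 2 with j hj
    rw [piecewise_eq_of_notMem _ _ _ (mem_compl.mp hj), Pi.one_apply, one_apply]
  simp [localProj, Function.update_eq_iff, hrest, vecMulVec_apply]

lemma cost_bounds_of_pointwise_bounds {Ω : Type*} [MeasurableSpace Ω] {μ : Measure Ω}
    [IsProbabilityMeasure μ] {G S : Ω → ℝ} {c : ℝ} (hc : 0 < c)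
    (hGm : AEStronglyMeasurable G μ) (hSm : AEStronglyMeasurable S μ) (hG0 : ∀ ω, 0 ≤ G ω)
    (hGS : ∀ ω, c * G ω ≤ S ω) (hSc : ∀ ω, S ω ≤ c) (hSG : ∀ ω, S ω ≤ c - 1 + G ω) :
    1 - ∫ ω, 1 / c * S ω ∂μ ≤ 1 - ∫ ω, G ω ∂μ ∧
      1 - ∫ ω, G ω ∂μ ≤ c * (1 - ∫ ω, 1 / c * S ω ∂μ) := by
  have hS0 ω : 0 ≤ S ω := (mul_nonneg hc.le (hG0 ω)).trans (hGS ω)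
  have hG1 ω : G ω ≤ 1 := le_of_mul_le_mul_left (by linarith [hGS ω, hSc ω]) hc
  have hGi : Integrable G μ := .of_bound hGm 1 (ae_of_all _ fun ω => by
    rw [Real.norm_eq_abs, abs_of_nonneg (hG0 ω)]; exact hG1 ω)
  have hSi : Integrable S μ := .of_bound hSm c (ae_of_all _ fun ω => by
    rw [Real.norm_eq_abs, abs_of_nonneg (hS0 ω)]; exact hSc ω)
  have hlow : c * ∫ ω, G ω ∂μ ≤ ∫ ω, S ω ∂μ := by
    rw [← integral_const_mul]
    exact integral_mono (hGi.const_mul c) hSi hGS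
  have hhigh : ∫ ω, S ω ∂μ ≤ c - 1 + ∫ ω, G ω ∂μ := by
    calc ∫ ω, S ω ∂μ ≤ ∫ ω, (c - 1 + G ω) ∂μ :=
          integral_mono hSi ((integrable_const _).add hGi) hSG
      _ = c - 1 + ∫ ω, G ω ∂μ := by
          rw [integral_add (integrable_const _) hGi, integral_const, probReal_univ, one_smul]
  rw [integral_const_mul]
  constructor
  · have : ∫ ω, G ω ∂μ ≤ 1 / c * ∫ ω, S ω ∂μ := by
      rw [one_div, inv_mul_eq_div, le_div_iff₀ hc]; linarith
    linarith
  · have : c * (1 - 1 / c * ∫ ω, S ω ∂μ) = c - ∫ ω, S ω ∂μ := by field_simp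
    linarith

instance {m : Type*} [Fintype m] [DecidableEq m] : BorelSpace (Matrix.unitaryGroup m ℂ) :=
  ⟨rfl⟩

instance {m : Type*} [Fintype m] [DecidableEq m] :
    SecondCountableTopology (Matrix.unitaryGroup m ℂ) :=
  @TopologicalSpace.Subtype.secondCountableTopology _ _ _
    (inferInstanceAs (SecondCountableTopology (m → m → ℂ)))

section ProductCost

variable {n : ℕ} (q₀ : Fin 2 → ℂ) (U V : Matrix.unitaryGroup (Fin n → Fin 2) ℂ)
  (w : Fin n → Matrix.unitaryGroup (Fin 2) ℂ)

noncomputable def qubitStates : Fin n → Fin 2 → ℂ := fun i => (w i).1 *ᵥ q₀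

lemma prodState_eq_piTensor : prodState q₀ w = piTensor (qubitStates q₀ w) := rfl

noncomputable def pullbackState : (Fin n → Fin 2) → ℂ := (U.1ᴴ * V.1)ᴴ *ᵥ prodState q₀ w

noncomputable def globalFidelity : ℝ :=
  ‖star (prodState q₀ w) ⬝ᵥ ((U.1ᴴ * V.1) *ᵥ prodState q₀ w)‖ ^ 2

noncomputable def localFidelity (i : Fin n) : ℝ :=
  (star (prodState q₀ w) ⬝ᵥ
    ((U.1ᴴ * V.1 * localProj (qubitStates q₀ w) i * V.1ᴴ * U.1) *ᵥ prodState q₀ w)).re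

lemma globalFidelity_eq_vectorState :
    globalFidelity q₀ U V w =
      vectorState (pullbackState q₀ U V w) (tensorProj (qubitStates q₀ w) univ) := by
  rw [globalFidelity, pullbackState, tensorProj_univ, vectorState_vecMulVec_star, star_mulVec,
    conjTranspose_conjTranspose, ← dotProduct_mulVec]
  rfl

lemma localFidelity_eq_vectorState (i : Fin n) :
    localFidelity q₀ U V w i =
      vectorState (pullbackState q₀ U V w) (tensorProj (qubitStates q₀ w) {i}) := by
  rw [pullbackState, ← localProj_eq_tensorProj, ← vectorState_mul_mul_conjTranspose,
    conjTranspose_mul,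
    conjTranspose_conjTranspose]
  simp only [localFidelity, vectorState_apply, Matrix.mul_assoc]
  rfl

@[fun_prop]
lemma continuous_prodState : Continuous (prodState (n := n) q₀) := by
  unfold prodState
  fun_prop

lemma continuous_globalFidelity : Continuous (globalFidelity q₀ U V) := by
  unfold globalFidelity
  fun_prop

lemma continuous_localFidelity (i : Fin n) : Continuous fun w => localFidelity q₀ U V w i := by
  unfold localFidelity localProj qubitStates
  fun_prop

variable {q₀} (hq₀ : star q₀ ⬝ᵥ q₀ = 1)
include hq₀

lemma star_qubitStates_dotProduct_self (i : Fin n) :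
    star (qubitStates q₀ w i) ⬝ᵥ qubitStates q₀ w i = 1 := by
  rw [qubitStates, star_mulVec_dotProduct_mulVec (UnitaryGroup.star_mul_self (w i)), hq₀]

lemma star_pullbackState_dotProduct_self :
    star (pullbackState q₀ U V w) ⬝ᵥ pullbackState q₀ U V w = 1 := by
  have hW : (U.1ᴴ * V.1)ᴴᴴ * (U.1ᴴ * V.1)ᴴ = 1 := by
    rw [conjTranspose_conjTranspose]
    exact mem_unitaryGroup_iff.mp (star U * V).2
  rw [pullbackState, star_mulVec_dotProduct_mulVec hW, prodState_eq_piTensor,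
    star_piTensor_dotProduct_self (star_qubitStates_dotProduct_self w hq₀)]

lemma globalFidelity_le_localFidelity (i : Fin n) :
    globalFidelity q₀ U V w ≤ localFidelity q₀ U V w i := by
  rw [globalFidelity_eq_vectorState, localFidelity_eq_vectorState]
  exact vectorState_mono _
    (tensorProj_le_of_subset (star_qubitStates_dotProduct_self w hq₀) (subset_univ _))

lemma mul_globalFidelity_le_sum_localFidelity :
    n * globalFidelity q₀ U V w ≤ ∑ i, localFidelity q₀ U V w i := by
  simpa using card_nsmul_le_sum univ _ _ fun i _ => globalFidelity_le_localFidelity U V w hq₀ i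

lemma localFidelity_le_one (i : Fin n) : localFidelity q₀ U V w i ≤ 1 := by
  rw [localFidelity_eq_vectorState]
  exact vectorState_le_one (star_pullbackState_dotProduct_self U V w hq₀)
    (isStarProjection_tensorProj (star_qubitStates_dotProduct_self w hq₀) _)

lemma sum_localFidelity_le_card : ∑ i, localFidelity q₀ U V w i ≤ n := by
  simpa using sum_le_card_nsmul univ _ 1 fun i _ => localFidelity_le_one U V w hq₀ i

lemma sum_localFidelity_le :
    ∑ i, localFidelity q₀ U V w i ≤ n - 1 + globalFidelity q₀ U V w := by
  simp only [localFidelity_eq_vectorState, globalFidelity_eq_vectorState]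
  simpa using sum_vectorState_tensorProj_singleton_le (star_qubitStates_dotProduct_self w hq₀)
    (star_pullbackState_dotProduct_self U V w hq₀) univ

end ProductCost

theorem global_vs_local_product_cost_general (n : ℕ) (hn : 1 ≤ n)
    (μ₂ : Measure (Matrix.unitaryGroup (Fin 2) ℂ))
    [IsProbabilityMeasure μ₂]
    (q₀ : Fin 2 → ℂ) (hq₀ : star q₀ ⬝ᵥ q₀ = 1)
    (U V : Matrix.unitaryGroup (Fin n → Fin 2) ℂ)
    (CGprod : ℝ)
    (hCGprod : CGprod = 1 - ∫ w : Fin n → Matrix.unitaryGroup (Fin 2) ℂ,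
        ‖(star (prodState q₀ w) ⬝ᵥ
          (((U : Matrix (Fin n → Fin 2) (Fin n → Fin 2) ℂ)ᴴ *
              (V : Matrix (Fin n → Fin 2) (Fin n → Fin 2) ℂ)) *ᵥ prodState q₀ w))‖ ^ 2
          ∂(Measure.pi fun _ : Fin n => μ₂))
    (CLprod : ℝ)
    (hCLprod : CLprod = 1 - ∫ w : Fin n → Matrix.unitaryGroup (Fin 2) ℂ,
        ((1 / n : ℝ) * ∑ i, (star (prodState q₀ w) ⬝ᵥ
          (((U : Matrix (Fin n → Fin 2) (Fin n → Fin 2) ℂ)ᴴ *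
              (V : Matrix (Fin n → Fin 2) (Fin n → Fin 2) ℂ) *
              localProj (fun i => (w i : Matrix (Fin 2) (Fin 2) ℂ) *ᵥ q₀) i *
              (V : Matrix (Fin n → Fin 2) (Fin n → Fin 2) ℂ)ᴴ *
              (U : Matrix (Fin n → Fin 2) (Fin n → Fin 2) ℂ)) *ᵥ prodState q₀ w)).re)
          ∂(Measure.pi fun _ : Fin n => μ₂)) :
    CLprod ≤ CGprod ∧ CGprod ≤ n * CLprod := by
  subst hCGprod hCLprod
  exact cost_bounds_of_pointwise_bounds (Nat.cast_pos.mpr hn)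
    (continuous_globalFidelity q₀ U V).aestronglyMeasurable
    (continuous_finsetSum _ fun i _ => continuous_localFidelity q₀ U V i).aestronglyMeasurable
    (fun w => by positivity)
    (mul_globalFidelity_le_sum_localFidelity U V · hq₀)
    (sum_localFidelity_le_card U V · hq₀)
    (sum_localFidelity_le U V · hq₀)

/-- product cost, global versus local:
`C^L_prod(U,V) ≤ C^G_prod(U,V) ≤ n·C^L_prod(U,V)`. -/
theorem global_vs_local_product_cost (n : ℕ) (hn : 1 ≤ n)
    (μ₂ : Measure (Matrix.unitaryGroup (Fin 2) ℂ))
    [IsProbabilityMeasure μ₂] [μ₂.IsMulLeftInvariant]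
    (q₀ : Fin 2 → ℂ) (hq₀ : star q₀ ⬝ᵥ q₀ = 1)
    (U V : Matrix.unitaryGroup (Fin n → Fin 2) ℂ)
    (CGprod : ℝ)
    (hCGprod : CGprod = 1 - ∫ w : Fin n → Matrix.unitaryGroup (Fin 2) ℂ,
        ‖(star (prodState q₀ w) ⬝ᵥ
          (((U : Matrix (Fin n → Fin 2) (Fin n → Fin 2) ℂ)ᴴ *
              (V : Matrix (Fin n → Fin 2) (Fin n → Fin 2) ℂ)) *ᵥ prodState q₀ w))‖ ^ 2
          ∂(Measure.pi fun _ : Fin n => μ₂))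
    (CLprod : ℝ)
    (hCLprod : CLprod = 1 - ∫ w : Fin n → Matrix.unitaryGroup (Fin 2) ℂ,
        ((1 / n : ℝ) * ∑ i, (star (prodState q₀ w) ⬝ᵥ
          (((U : Matrix (Fin n → Fin 2) (Fin n → Fin 2) ℂ)ᴴ *
              (V : Matrix (Fin n → Fin 2) (Fin n → Fin 2) ℂ) *
              localProj (fun i => (w i : Matrix (Fin 2) (Fin 2) ℂ) *ᵥ q₀) i *
              (V : Matrix (Fin n → Fin 2) (Fin n → Fin 2) ℂ)ᴴ *
              (U : Matrix (Fin n → Fin 2) (Fin n → Fin 2) ℂ)) *ᵥ prodState q₀ w)).re)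
          ∂(Measure.pi fun _ : Fin n => μ₂)) :
    CLprod ≤ CGprod ∧ CGprod ≤ n * CLprod :=
  global_vs_local_product_cost_general n hn μ₂ q₀ hq₀ U V CGprod hCGprod CLprod hCLprod
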